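/- arXiv:2004.05837 — 2 statements merged into one kernel-verified Lean document; each statement's English description precedes it below -/
import Mathlib

section
/- Let β, δ, τ, r > 0 and let d, d', φ ∈ ℝ with d = d' + (τ/δ) max(-β(d-φ) - r, 0). Set ω = -β(d' - φ) - r. Then d = φ - r/β - ω/β + (1/β) max(ω, 0) (1 - (1 + (β/δ)τ)⁻¹). -/
theorem implicit_euler_closed_form (β δ τ r d d' φ : ℝ)
    (hβ : 0 < β) (hδ : 0 < δ) (hτ : 0 < τ) (hr : 0 < r)
    (hstep : d = d' + τ / δ * max (-β * (d - φ) - r) 0)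
    (ω : ℝ) (hω : ω = -β * (d' - φ) - r) :
    d = φ - r / β - ω / β + (1 / β) * max ω 0 * (1 - (1 + β / δ * τ)⁻¹) := by
  have hβ' : β ≠ 0 := ne_of_gt hβ
  have hδ' : δ ≠ 0 := ne_of_gt hδ
  have hden : (1 : ℝ) + β / δ * τ ≠ 0 := by positivity
  set A := -β * (d - φ) - r with hA
  rcases le_or_gt A 0 with h | h
  · rw [max_eq_right h] at hstep
    have hd : d = d' := by linarith [hstep]
    have hωA : ω = A := by rw [hω, hA, hd]
    have hω0 : max ω 0 = 0 := max_eq_right (by linarith [hωA])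
    rw [hω0, hω, hd]
    field_simp
    ring
  · rw [max_eq_left h.le] at hstep
    have hωA : ω = A + β * (τ / δ) * A := by
      linear_combination hω - hA + β * hstep
    have hωpos : 0 < ω := by
      have : 0 < β * (τ / δ) * A := by positivity
      linarith
    have hd : δ * d + β * τ * d = δ * d' + τ * (β * φ - r) := by
      have h2 := hstep
      rw [hA] at h2
      field_simp at h2
      linarith
    rw [max_eq_left hωpos.le, hωA, hA]
    field_simp
    ring
end

section
/- The regularization max_ε (defined piecewise: 0 for x ≤ 0, -(1/(2ε³))x⁴ + (1/ε²)x³ for 0 < x < ε, x - ε/2 for x ≥ ε) satisfies 0 ≤ max_ε'(x) ≤ 3/2 for all x ∈ ℝ. -/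
noncomputable def maxe (ε : ℝ) (x : ℝ) : ℝ :=
  if x ≤ 0 then 0
  else if x < ε then -(1 / (2 * ε ^ 3)) * x ^ 4 + (1 / ε ^ 2) * x ^ 3
  else x - ε / 2

/-!
The quartic piece `P = maxePoly ε` matches the neighbouring pieces to first order at both knots:
`P 0 = 0`, `P' 0 = 0`, `P ε = ε / 2`, `P' ε = 1`. Hence `maxe ε` is differentiable everywhere,
with derivative `0`, `P' x = x² (3ε - 2x) / ε³` or `1`. On `[0, ε]` the middle value lies in
`[0, 1]`, because `ε³ - x² (3ε - 2x) = (ε - x)² (ε + 2x)`.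
-/

open Set Filter Topology

theorem HasDerivAt.of_eventuallyEq_nhdsLE_nhdsGE {F : Type*} [NormedAddCommGroup F]
    [NormedSpace ℝ F] {f g h : ℝ → F} {a : ℝ} {d : F} (hg : HasDerivAt g d a)
    (hh : HasDerivAt h d a) (hfg : f =ᶠ[𝓝[≤] a] g) (hfh : f =ᶠ[𝓝[≥] a] h) :
    HasDerivAt f d a := by
  have hle := hg.hasDerivWithinAt.congr_of_eventuallyEq hfg (hfg.eq_of_nhdsWithin self_mem_Iic)
  have hge := hh.hasDerivWithinAt.congr_of_eventuallyEq hfh (hfh.eq_of_nhdsWithin self_mem_Ici)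
  simpa only [Iic_union_Ici, hasDerivWithinAt_univ] using hle.union hge

noncomputable def maxePoly (ε y : ℝ) : ℝ :=
  -(1 / (2 * ε ^ 3)) * y ^ 4 + (1 / ε ^ 2) * y ^ 3

noncomputable def maxePolyDeriv (ε y : ℝ) : ℝ :=
  y ^ 2 * (3 * ε - 2 * y) / ε ^ 3

noncomputable def maxeDeriv (ε x : ℝ) : ℝ :=
  if x ≤ 0 then 0 else if x < ε then maxePolyDeriv ε x else 1

section

variable {ε : ℝ}

theorem hasDerivAt_maxePoly (hε : ε ≠ 0) (y : ℝ) :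
    HasDerivAt (maxePoly ε) (maxePolyDeriv ε y) y := by
  have h := ((hasDerivAt_pow 4 y).const_mul (-(1 / (2 * ε ^ 3)))).add
    ((hasDerivAt_pow 3 y).const_mul (1 / ε ^ 2))
  refine h.congr_deriv ?_
  rw [maxePolyDeriv]
  field_simp
  ring

theorem maxePolyDeriv_zero : maxePolyDeriv ε 0 = 0 := by
  simp [maxePolyDeriv]

theorem maxePolyDeriv_self (hε : ε ≠ 0) : maxePolyDeriv ε ε = 1 := by
  rw [maxePolyDeriv]
  field_simp
  ring

theorem maxePolyDeriv_mem_Icc {x : ℝ} (hx : x ∈ Icc 0 ε) : maxePolyDeriv ε x ∈ Icc 0 1 := by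
  obtain ⟨hx0, hxε⟩ := hx
  have hε3 : 0 ≤ ε ^ 3 := pow_nonneg (hx0.trans hxε) 3
  refine ⟨div_nonneg (mul_nonneg (sq_nonneg x) (by linarith)) hε3, div_le_one_of_le₀ ?_ hε3⟩
  nlinarith [mul_nonneg (sq_nonneg (ε - x)) (by linarith : 0 ≤ ε + 2 * x)]

theorem maxeDeriv_mem_Icc (x : ℝ) : maxeDeriv ε x ∈ Icc 0 1 := by
  unfold maxeDeriv
  split_ifs with hx0 hxε
  · simp
  · exact maxePolyDeriv_mem_Icc ⟨(not_le.mp hx0).le, hxε.le⟩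
  · simp

theorem maxe_eqOn_Iic : EqOn (maxe ε) 0 (Iic 0) := fun _ hx => if_pos hx

theorem maxe_eqOn_Icc (hε : ε ≠ 0) : EqOn (maxe ε) (maxePoly ε) (Icc 0 ε) := by
  rintro x ⟨hx0, hxε⟩
  rcases hx0.eq_or_lt with rfl | hx0
  · simp [maxe, maxePoly]
  rcases hxε.lt_or_eq with hxε | rfl
  · simp [maxe, maxePoly, not_le.mpr hx0, hxε]
  · simp only [maxe, maxePoly, if_neg (not_le.mpr hx0), lt_irrefl, if_false]
    field_simp
    ring

theorem maxe_eqOn_Ici (hε : 0 < ε) : EqOn (maxe ε) (fun y => y - ε / 2) (Ici ε) := by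
  intro x hx
  simp [maxe, not_le.mpr (hε.trans_le hx), not_lt.mpr (mem_Ici.mp hx)]

theorem hasDerivAt_maxe (hε : 0 < ε) (x : ℝ) : HasDerivAt (maxe ε) (maxeDeriv ε x) x := by
  have hconst (y : ℝ) : HasDerivAt (0 : ℝ → ℝ) 0 y := hasDerivAt_const y 0
  have hline (y : ℝ) : HasDerivAt (fun y => y - ε / 2) 1 y := (hasDerivAt_id y).sub_const _
  have hpoly := hasDerivAt_maxePoly hε.ne'
  rcases lt_trichotomy x 0 with hx0 | rfl | hx0
  · rw [maxeDeriv, if_pos hx0.le]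
    exact (hconst x).congr_of_eventuallyEq (maxe_eqOn_Iic.eventuallyEq_of_mem (Iic_mem_nhds hx0))
  · rw [maxeDeriv, if_pos le_rfl]
    refine (hconst 0).of_eventuallyEq_nhdsLE_nhdsGE (maxePolyDeriv_zero (ε := ε) ▸ hpoly 0)
      (maxe_eqOn_Iic.eventuallyEq_of_mem self_mem_nhdsWithin) ?_
    exact (maxe_eqOn_Icc hε.ne').eventuallyEq_of_mem (Icc_mem_nhdsGE hε)
  rcases lt_trichotomy x ε with hxε | rfl | hxε
  · rw [maxeDeriv, if_neg (not_le.mpr hx0), if_pos hxε]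
    exact (hpoly x).congr_of_eventuallyEq
      ((maxe_eqOn_Icc hε.ne').eventuallyEq_of_mem (Icc_mem_nhds hx0 hxε))
  · rw [maxeDeriv, if_neg (not_le.mpr hx0), if_neg (lt_irrefl x)]
    refine (maxePolyDeriv_self hε.ne' ▸ hpoly x).of_eventuallyEq_nhdsLE_nhdsGE (hline x) ?_
      ((maxe_eqOn_Ici hε).eventuallyEq_of_mem self_mem_nhdsWithin)
    exact (maxe_eqOn_Icc hε.ne').eventuallyEq_of_mem (Icc_mem_nhdsLE hx0)
  · rw [maxeDeriv, if_neg (not_le.mpr hx0), if_neg (not_lt.mpr hxε.le)]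
    exact (hline x).congr_of_eventuallyEq
      ((maxe_eqOn_Ici hε).eventuallyEq_of_mem (Ici_mem_nhds hxε))

end

theorem maxe_deriv_bounds (ε : ℝ) (hε : 0 < ε) (x : ℝ) :
    0 ≤ deriv (maxe ε) x ∧ deriv (maxe ε) x ≤ 3 / 2 := by
  obtain ⟨hd0, hd1⟩ := maxeDeriv_mem_Icc (ε := ε) x
  rw [(hasDerivAt_maxe hε x).deriv]
  exact ⟨hd0, by linarith⟩
end
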